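/- arXiv:1807.02423 — 3 statements merged into one kernel-verified Lean document; each statement's English description precedes it below -/
import Mathlib

section
/- Let f : H → G be a homomorphism of Hilbert algebras, I ∈ X*(G) and J ∈ X*(H) such that f⁻¹(I) ⊆ J. Then there exists K ∈ X*(G) such that I ⊆ K and f⁻¹(K) = J. -/
/-- A Hilbert algebra `(H, →, 1)`. -/
structure HilbertAlgebra (H : Type*) where
  imp : H → H → H
  one : H
  ax1 : ∀ a b : H, imp a (imp b a) = one
  ax2 : ∀ a b c : H, imp (imp a (imp b c)) (imp (imp a b) (imp a c)) = one
  ax3 : ∀ a b : H, imp a b = one → imp b a = one → a = b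

namespace HilbertAlgebra

variable {H : Type*} (hH : HilbertAlgebra H)

/-- The natural order: `a ≤ b` iff `a → b = 1`. -/
def le (a b : H) : Prop := hH.imp a b = hH.one

/-- Implicative filter. -/
def IsImplicativeFilter (F : Set H) : Prop :=
  hH.one ∈ F ∧ ∀ a b : H, a ∈ F → hH.imp a b ∈ F → b ∈ F

/-- Irreducible implicative filter. -/
def IsIrreducible (F : Set H) : Prop :=
  hH.IsImplicativeFilter F ∧ F ≠ Set.univ ∧
    ∀ F₁ F₂ : Set H, hH.IsImplicativeFilter F₁ → hH.IsImplicativeFilter F₂ →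
      F = F₁ ∩ F₂ → (F = F₁ ∨ F = F₂)

/-- Order-ideal: nonempty, downward closed, up-directed (w.r.t. the natural order). -/
def IsOrderIdeal (I : Set H) : Prop :=
  I.Nonempty ∧ (∀ a b : H, b ∈ I → hH.le a b → a ∈ I) ∧
    ∀ a b : H, a ∈ I → b ∈ I → ∃ c ∈ I, hH.le a c ∧ hH.le b c

/-- `φ(a) = {P ∈ X(H) : a ∈ P}`. -/
def phi (a : H) : Set (Set H) := {P | hH.IsIrreducible P ∧ a ∈ P}

/-- An upset of `X(H)` (the poset of irreducible implicative filters, ordered by `⊆`). -/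
def IsUpsetX (U : Set (Set H)) : Prop :=
  (∀ P ∈ U, hH.IsIrreducible P) ∧
    ∀ P Q : Set H, P ∈ U → hH.IsIrreducible Q → P ⊆ Q → Q ∈ U

/-- The Heyting implication `U ⇒ V` on upsets of `X(H)`. -/
def impUps (U V : Set (Set H)) : Set (Set H) :=
  {P | hH.IsIrreducible P ∧ ∀ Q : Set H, hH.IsIrreducible Q → P ⊆ Q → Q ∈ U → Q ∈ V}

/-- `FC(H)`: finite nonempty intersections of sets of the form `φ(a)`. -/
def FC : Set (Set (Set H)) :=
  {U | ∃ l : List H, l ≠ [] ∧ U = ⋂ a ∈ l, hH.phi a}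

/-- `X*(H)`: implicative filters that are intersections of finitely many (at least one)
irreducible implicative filters. -/
def XStar : Set (Set H) :=
  {F | ∃ S : Set (Set H), S.Finite ∧ S.Nonempty ∧ (∀ P ∈ S, hH.IsIrreducible P) ∧ F = ⋂₀ S}

/-- `Φ(a) = {F ∈ X*(H) : a ∈ F}`. -/
def Phi (a : H) : Set (Set H) := {F | F ∈ hH.XStar ∧ a ∈ F}

/-- An upset of `X*(H)` (ordered by `⊆`). -/
def IsUpsetXStar (U : Set (Set H)) : Prop :=
  (∀ F ∈ U, F ∈ hH.XStar) ∧
    ∀ F K : Set H, F ∈ U → K ∈ hH.XStar → F ⊆ K → K ∈ U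

/-- The implication `U ⇒ V` on upsets of `X*(H)`. -/
def impUpsStar (U V : Set (Set H)) : Set (Set H) :=
  {F | F ∈ hH.XStar ∧ ∀ K : Set H, K ∈ hH.XStar → F ⊆ K → K ∈ U → K ∈ V}

/-- Homomorphism of Hilbert algebras. -/
def IsHom {G : Type*} (hG : HilbertAlgebra G) (f : H → G) : Prop :=
  f hH.one = hG.one ∧ ∀ a b : H, f (hH.imp a b) = hG.imp (f a) (f b)

end HilbertAlgebra

/-- A Hilbert algebra with supremum: `(H, ∨)` is a join-semilattice whose induced
order has greatest element `1`, and `a → b = 1` iff `a ∨ b = b`. -/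
structure HilbertSup (H : Type*) extends HilbertAlgebra H where
  sup : H → H → H
  sup_comm : ∀ a b : H, sup a b = sup b a
  sup_assoc : ∀ a b c : H, sup (sup a b) c = sup a (sup b c)
  sup_idem : ∀ a : H, sup a a = a
  sup_one : ∀ a : H, sup a one = one
  imp_eq_one_iff : ∀ a b : H, imp a b = one ↔ sup a b = b

/-- Morphism of Hilbert algebras with supremum. -/
def HilbertSup.IsHomSup {H G : Type*} (hH : HilbertSup H) (hG : HilbertSup G)
    (f : H → G) : Prop :=
  hH.toHilbertAlgebra.IsHom hG.toHilbertAlgebra f ∧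
    ∀ a b : H, f (hH.sup a b) = hG.sup (f a) (f b)

/-- An implicative semilattice: a meet-semilattice with greatest element and a binary
operation `him` such that `a ⊓ b ≤ c ↔ a ≤ him b c`. -/
class ImplicativeSemilattice (G : Type*) extends SemilatticeInf G, OrderTop G where
  him : G → G → G
  inf_le_iff_le_him : ∀ a b c : G, a ⊓ b ≤ c ↔ a ≤ him b c
/-!
It suffices to treat one irreducible filter `P` of `J = P₁ ∩ ⋯ ∩ Pₙ`: find an irreducible
`Q ⊇ I` of `G` with `f⁻¹(Q) = P`, then intersect these `Q`. By Zorn take `Q` maximal among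
the filters containing `I` with `f⁻¹(Q) ⊆ P`. Maximality forces `f(P) ⊆ Q`, because adjoining
`f p` to `Q` gives the filter `{x | f p → x ∈ Q}`, whose preimage stays inside `P`. If
`Q = F₁ ∩ F₂` with both `Fᵢ` strictly larger, maximality gives `aᵢ ∉ P` with `f aᵢ ∈ Fᵢ`;
irreducibility of `P` gives `c ∉ P` with `aᵢ → c ∈ P`, so `f c ∈ F₁ ∩ F₂ = Q` and `c ∈ P`.
-/

namespace HilbertAlgebra

variable {H : Type*} {hH : HilbertAlgebra H}

namespace IsImplicativeFilter

variable {F : Set H}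

theorem mem_of_eq_one (hF : hH.IsImplicativeFilter F) {a : H} (h : a = hH.one) : a ∈ F :=
  h ▸ hF.1

theorem mem_of_imp_eq_one (hF : hH.IsImplicativeFilter F) {a b : H} (ha : a ∈ F)
    (h : hH.imp a b = hH.one) : b ∈ F :=
  hF.2 a b ha (hF.mem_of_eq_one h)

theorem imp_mem (hF : hH.IsImplicativeFilter F) {a : H} (b : H) (ha : a ∈ F) :
    hH.imp b a ∈ F :=
  hF.mem_of_imp_eq_one ha (hH.ax1 a b)

theorem imp_self_mem (hF : hH.IsImplicativeFilter F) (a : H) : hH.imp a a ∈ F := by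
  have h : hH.imp (hH.imp a (hH.imp a a)) (hH.imp a a) ∈ F :=
    hF.2 _ _ (hF.mem_of_eq_one (hH.ax1 a (hH.imp a a)))
      (hF.mem_of_eq_one (hH.ax2 a (hH.imp a a) a))
  exact hF.2 _ _ (hF.mem_of_eq_one (hH.ax1 a a)) h

/-- The filter generated by `F ∪ {a}`. -/
theorem setOf_imp_mem (hF : hH.IsImplicativeFilter F) (a : H) :
    hH.IsImplicativeFilter {x | hH.imp a x ∈ F} :=
  ⟨hF.imp_mem a hF.1, fun x y hx hxy =>
    hF.2 _ _ hx (hF.2 _ _ hxy (hF.mem_of_eq_one (hH.ax2 a x y)))⟩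

end IsImplicativeFilter

theorem isImplicativeFilter_sInter {S : Set (Set H)}
    (hS : ∀ F ∈ S, hH.IsImplicativeFilter F) : hH.IsImplicativeFilter (⋂₀ S) :=
  ⟨fun F hF => (hS F hF).1, fun a b ha hab F hF => (hS F hF).2 a b (ha F hF) (hab F hF)⟩

theorem isImplicativeFilter_sUnion_of_isChain {c : Set (Set H)} (hc : IsChain (· ⊆ ·) c)
    (hne : c.Nonempty) (hfilt : ∀ F ∈ c, hH.IsImplicativeFilter F) :
    hH.IsImplicativeFilter (⋃₀ c) := by
  obtain ⟨F₀, hF₀⟩ := hne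
  refine ⟨⟨F₀, hF₀, (hfilt F₀ hF₀).1⟩, ?_⟩
  rintro a b ⟨F₁, hF₁, ha⟩ ⟨F₂, hF₂, hab⟩
  rcases hc.total hF₁ hF₂ with h | h
  · exact ⟨F₂, hF₂, (hfilt F₂ hF₂).2 a b (h ha) hab⟩
  · exact ⟨F₁, hF₁, (hfilt F₁ hF₁).2 a b ha (h hab)⟩

theorem isImplicativeFilter_of_mem_XStar {F : Set H} (hF : F ∈ hH.XStar) :
    hH.IsImplicativeFilter F := by
  obtain ⟨S, -, -, hS, rfl⟩ := hF
  exact isImplicativeFilter_sInter fun P hP => (hS P hP).1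

theorem iInter_mem_XStar {ι : Type*} [Finite ι] [Nonempty ι] {P : ι → Set H}
    (hP : ∀ i, hH.IsIrreducible (P i)) : ⋂ i, P i ∈ hH.XStar :=
  ⟨Set.range P, Set.finite_range P, Set.range_nonempty P, Set.forall_mem_range.2 hP,
    (Set.sInter_range P).symm⟩

/-- The complement of an irreducible filter `P` is directed for the preorder `a → c ∈ P`. -/
theorem IsIrreducible.exists_notMem_imp_mem {P : Set H} (hP : hH.IsIrreducible P) {a b : H}
    (ha : a ∉ P) (hb : b ∉ P) : ∃ c ∉ P, hH.imp a c ∈ P ∧ hH.imp b c ∈ P := by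
  by_contra! h
  have hsplit : P = {x | hH.imp a x ∈ P} ∩ {x | hH.imp b x ∈ P} :=
    subset_antisymm (fun x hx => ⟨hP.1.imp_mem a hx, hP.1.imp_mem b hx⟩)
      fun x ⟨hax, hbx⟩ => by_contra fun hx => h x hx hax hbx
  rcases hP.2.2 _ _ (hP.1.setOf_imp_mem a) (hP.1.setOf_imp_mem b) hsplit with h' | h'
  · exact ha (by rw [h']; exact hP.1.imp_self_mem a)
  · exact hb (by rw [h']; exact hP.1.imp_self_mem b)

section Extension

variable {G : Type*} {hG : HilbertAlgebra G} {f : H → G} {P : Set H} {Q : Set G}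

theorem exists_maximal_preimage_subset (I : Set G) (hI : hG.IsImplicativeFilter I)
    (hIP : f ⁻¹' I ⊆ P) :
    ∃ Q, I ⊆ Q ∧ Maximal (fun F => hG.IsImplicativeFilter F ∧ f ⁻¹' F ⊆ P) Q := by
  refine zorn_subset_nonempty {F | hG.IsImplicativeFilter F ∧ f ⁻¹' F ⊆ P} ?_ I ⟨hI, hIP⟩
  intro c hc hchain hne
  refine ⟨⋃₀ c, ⟨isImplicativeFilter_sUnion_of_isChain hchain hne fun F hF => (hc hF).1, ?_⟩,
    fun F hF => Set.subset_sUnion_of_mem hF⟩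
  rintro x ⟨F, hF, hx⟩
  exact (hc hF).2 hx

theorem preimage_eq_of_maximal (hf : hH.IsHom hG f) (hP : hH.IsImplicativeFilter P)
    (hQ : Maximal (fun F => hG.IsImplicativeFilter F ∧ f ⁻¹' F ⊆ P) Q) : f ⁻¹' Q = P := by
  refine hQ.1.2.antisymm fun p hp => ?_
  have hQ' : hG.IsImplicativeFilter {x | hG.imp (f p) x ∈ Q} ∧
      f ⁻¹' {x | hG.imp (f p) x ∈ Q} ⊆ P := by
    refine ⟨hQ.1.1.setOf_imp_mem (f p), fun x hx => hP.2 p x hp (hQ.1.2 ?_)⟩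
    rw [Set.mem_preimage, hf.2]
    exact hx
  rw [Set.mem_preimage, hQ.eq_of_subset hQ' fun x => hQ.1.1.imp_mem (f p)]
  exact hQ.1.1.imp_self_mem (f p)

theorem isIrreducible_of_maximal (hf : hH.IsHom hG f) (hP : hH.IsIrreducible P)
    (hQ : Maximal (fun F => hG.IsImplicativeFilter F ∧ f ⁻¹' F ⊆ P) Q) :
    hG.IsIrreducible Q := by
  have hQP := preimage_eq_of_maximal hf hP.1 hQ
  refine ⟨hQ.1.1, fun hQu => hP.2.1 (by rw [← hQP, hQu, Set.preimage_univ]), ?_⟩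
  intro F₁ F₂ hF₁ hF₂ hQF
  by_contra! hne
  have hescape : ∀ F, hG.IsImplicativeFilter F → Q ⊆ F → Q ≠ F → ∃ a ∉ P, f a ∈ F := by
    intro F hF hQF hne
    by_contra! h
    exact hne (hQ.eq_of_subset ⟨hF, fun a ha => by_contra fun haP => h a haP ha⟩ hQF)
  have hQ₁ : Q ⊆ F₁ := hQF ▸ Set.inter_subset_left
  have hQ₂ : Q ⊆ F₂ := hQF ▸ Set.inter_subset_right
  obtain ⟨a₁, ha₁P, ha₁⟩ := hescape F₁ hF₁ hQ₁ hne.1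
  obtain ⟨a₂, ha₂P, ha₂⟩ := hescape F₂ hF₂ hQ₂ hne.2
  obtain ⟨c, hcP, hc₁, hc₂⟩ := hP.exists_notMem_imp_mem ha₁P ha₂P
  have hfc : ∀ a, hH.imp a c ∈ P → ∀ F, Q ⊆ F → hG.IsImplicativeFilter F → f a ∈ F → f c ∈ F :=
    fun a hac F hQF hF ha =>
      hF.2 _ _ ha (hf.2 a c ▸ hQF (show hH.imp a c ∈ f ⁻¹' Q from hQP ▸ hac))
  refine hcP (hQP ▸ ?_)
  rw [Set.mem_preimage, hQF]
  exact ⟨hfc a₁ hc₁ F₁ hQ₁ hF₁ ha₁, hfc a₂ hc₂ F₂ hQ₂ hF₂ ha₂⟩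

theorem exists_isIrreducible_preimage_eq (hf : hH.IsHom hG f) {I : Set G}
    (hI : hG.IsImplicativeFilter I) (hP : hH.IsIrreducible P) (hIP : f ⁻¹' I ⊆ P) :
    ∃ Q, hG.IsIrreducible Q ∧ I ⊆ Q ∧ f ⁻¹' Q = P := by
  obtain ⟨Q, hIQ, hQ⟩ := exists_maximal_preimage_subset I hI hIP
  exact ⟨Q, isIrreducible_of_maximal hf hP hQ, hIQ, preimage_eq_of_maximal hf hP.1 hQ⟩

end Extension

end HilbertAlgebra

theorem stmt_16 {H G : Type*} (hH : HilbertAlgebra H) (hG : HilbertAlgebra G) (f : H → G)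
    (hf : hH.IsHom hG f) (I : Set G) (hI : I ∈ hG.XStar)
    (J : Set H) (hJ : J ∈ hH.XStar) (hIJ : f ⁻¹' I ⊆ J) :
    ∃ K : Set G, K ∈ hG.XStar ∧ I ⊆ K ∧ f ⁻¹' K = J := by
  obtain ⟨S, hSfin, hSne, hSirr, rfl⟩ := hJ
  choose Q hQ using fun P : S => HilbertAlgebra.exists_isIrreducible_preimage_eq hf
    (HilbertAlgebra.isImplicativeFilter_of_mem_XStar hI) (hSirr P P.2)
    (hIJ.trans (Set.sInter_subset_of_mem P.2))
  have := hSfin.to_subtype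
  have := hSne.to_subtype
  refine ⟨⋂ P, Q P, HilbertAlgebra.iInter_mem_XStar fun P => (hQ P).1,
    Set.subset_iInter fun P => (hQ P).2.1, ?_⟩
  rw [Set.preimage_iInter, Set.sInter_eq_iInter]
  exact Set.iInter_congr fun P => (hQ P).2.2
end

section
/- Let H be a Hilbert algebra and define Φ(a) = {F ∈ X*(H) : a ∈ F} for a ∈ H. Then: (i) Φ(a) is an upset of X*(H) for every a ∈ H; (ii) Φ(1) = X*(H); (iii) Φ(a→b) = Φ(a) ⇒ Φ(b) for all a,b ∈ H; and (iv) Φ is injective. -/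
namespace HilbertAlgebra
variable {H : Type*} (hH : HilbertAlgebra H)

lemma mp' {a b : H} (h1 : hH.imp a b = hH.one) (h2 : a = hH.one) : b = hH.one := by
  have g1 := hH.ax1 b a
  rw [h1] at g1
  have g2 := h1
  rw [h2] at g2
  exact hH.ax3 b hH.one g1 g2

lemma imp_self' (a : H) : hH.imp a a = hH.one :=
  hH.mp' (hH.mp' (hH.ax2 a (hH.imp a a) a) (hH.ax1 a (hH.imp a a))) (hH.ax1 a a)

lemma imp_one' (a : H) : hH.imp a hH.one = hH.one := by
  have h := hH.ax1 a a
  rwa [hH.imp_self' a] at h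

lemma one_imp' (a : H) : hH.imp hH.one a = a := by
  apply hH.ax3
  · exact hH.mp' (hH.mp' (hH.ax2 (hH.imp hH.one a) hH.one a) (hH.imp_self' _)) (hH.imp_one' _)
  · exact hH.ax1 a hH.one

lemma upclosed {F : Set H} (hF : hH.IsImplicativeFilter F) {x y : H}
    (hx : x ∈ F) (h : hH.imp x y = hH.one) : y ∈ F :=
  hF.2 x y hx (h ▸ hF.1)

/-- the filter generated by `F ∪ {a}` -/
def fext (F : Set H) (a : H) : Set H := {x | hH.imp a x ∈ F}

lemma fext_filter {F : Set H} (hF : hH.IsImplicativeFilter F) (a : H) :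
    hH.IsImplicativeFilter (hH.fext F a) := by
  constructor
  · show hH.imp a hH.one ∈ F
    rw [hH.imp_one']; exact hF.1
  · intro x y hx hxy
    have s2 : hH.imp (hH.imp a x) (hH.imp a y) ∈ F :=
      hF.2 _ _ hxy ((hH.ax2 a x y) ▸ hF.1)
    exact hF.2 _ _ hx s2

lemma subset_fext {F : Set H} (hF : hH.IsImplicativeFilter F) (a : H) :
    F ⊆ hH.fext F a := fun x hx => hH.upclosed hF hx (hH.ax1 x a)

lemma mem_fext_self {F : Set H} (hF : hH.IsImplicativeFilter F) (a : H) :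
    a ∈ hH.fext F a := by
  show hH.imp a a ∈ F
  rw [hH.imp_self']; exact hF.1

lemma separation {F : Set H} (hF : hH.IsImplicativeFilter F) {b : H} (hb : b ∉ F) :
    ∃ P : Set H, hH.IsIrreducible P ∧ F ⊆ P ∧ b ∉ P := by
  set S : Set (Set H) := {G | hH.IsImplicativeFilter G ∧ F ⊆ G ∧ b ∉ G} with hS
  have chain : ∀ c ⊆ S, IsChain (· ⊆ ·) c → c.Nonempty →
      ∃ ub ∈ S, ∀ s ∈ c, s ⊆ ub := by
    intro c hcS hchain hcne
    refine ⟨⋃₀ c, ⟨⟨?_, ?_⟩, ?_, ?_⟩, fun s hs => Set.subset_sUnion_of_mem hs⟩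
    · obtain ⟨G, hG⟩ := hcne
      exact ⟨G, hG, (hcS hG).1.1⟩
    · rintro x y ⟨G₁, hG₁, hx⟩ ⟨G₂, hG₂, hxy⟩
      rcases hchain.total hG₁ hG₂ with h | h
      · exact ⟨G₂, hG₂, (hcS hG₂).1.2 x y (h hx) hxy⟩
      · exact ⟨G₁, hG₁, (hcS hG₁).1.2 x y hx (h hxy)⟩
    · obtain ⟨G, hG⟩ := hcne
      exact (hcS hG).2.1.trans (Set.subset_sUnion_of_mem hG)
    · rintro ⟨G, hG, hbG⟩
      exact (hcS hG).2.2 hbG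
  obtain ⟨m, hFm, hmS, hmax⟩ := zorn_subset_nonempty S chain F ⟨hF, subset_rfl, hb⟩
  · refine ⟨m, ⟨hmS.1, ?_, ?_⟩, hFm, hmS.2.2⟩
    · intro h
      exact hmS.2.2 (h ▸ Set.mem_univ b)
    · intro F₁ F₂ hF₁ hF₂ hm
      by_contra hcon
      push_neg at hcon
      have hb₁ : b ∈ F₁ := by
        by_contra hb₁
        have h₁ : F₁ ∈ S := ⟨hF₁, hFm.trans (hm ▸ Set.inter_subset_left), hb₁⟩
        exact hcon.1 (subset_antisymm (hm ▸ Set.inter_subset_left)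
          (hmax h₁ (hm ▸ Set.inter_subset_left)) ▸ rfl)
      have hb₂ : b ∈ F₂ := by
        by_contra hb₂
        have h₂ : F₂ ∈ S := ⟨hF₂, hFm.trans (hm ▸ Set.inter_subset_right), hb₂⟩
        exact hcon.2 (subset_antisymm (hm ▸ Set.inter_subset_right)
          (hmax h₂ (hm ▸ Set.inter_subset_right)) ▸ rfl)
      exact hmS.2.2 (hm ▸ Set.mem_inter hb₁ hb₂)

lemma xstar_filter {F : Set H} (h : F ∈ hH.XStar) : hH.IsImplicativeFilter F := by
  obtain ⟨S, _, hne, hirr, rfl⟩ := h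
  constructor
  · exact fun P hP => (hirr P hP).1.1
  · intro x y hx hxy P hP
    exact (hirr P hP).1.2 x y (hx P hP) (hxy P hP)

lemma irred_mem_xstar {P : Set H} (h : hH.IsIrreducible P) : P ∈ hH.XStar :=
  ⟨{P}, Set.finite_singleton P, Set.singleton_nonempty P,
    fun Q hQ => (Set.mem_singleton_iff.mp hQ) ▸ h, (Set.sInter_singleton P).symm⟩

lemma one_mem_xstar {F : Set H} (h : F ∈ hH.XStar) : hH.one ∈ F :=
  (hH.xstar_filter h).1

end HilbertAlgebra

theorem stmt_17 {H : Type*} (hH : HilbertAlgebra H) :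
    (∀ a : H, hH.IsUpsetXStar (hH.Phi a)) ∧
    (hH.Phi hH.one = hH.XStar) ∧
    (∀ a b : H, hH.Phi (hH.imp a b) = hH.impUpsStar (hH.Phi a) (hH.Phi b)) ∧
    Function.Injective hH.Phi := by
  have hsub : ∀ a b : H, hH.Phi a = hH.Phi b → hH.imp a b = hH.one := by
    intro a b hab
    by_contra hne
    set G : Set H := {x | hH.imp a x = hH.one} with hG
    have hGfil : hH.IsImplicativeFilter G := by
      constructor
      · exact hH.imp_one' a
      · intro x y hx hxy
        exact hH.mp' (hH.mp' (hH.ax2 a x y) hxy) hx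
    obtain ⟨P, hPirr, hGP, hbP⟩ := hH.separation hGfil (show b ∉ G from hne)
    have hPx : P ∈ hH.XStar := hH.irred_mem_xstar hPirr
    have hPa : P ∈ hH.Phi a := ⟨hPx, hGP (hH.imp_self' a)⟩
    rw [hab] at hPa
    exact hbP hPa.2
  refine ⟨?_, ?_, ?_, ?_⟩
  · intro a
    exact ⟨fun F hF => hF.1, fun F K hF hK hFK => ⟨hK, hFK hF.2⟩⟩
  · ext F
    exact ⟨fun h => h.1, fun h => ⟨h, hH.one_mem_xstar h⟩⟩
  · intro a b
    ext F
    constructor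
    · rintro ⟨hFx, hab⟩
      refine ⟨hFx, fun K hKx hFK hKa => ⟨hKx, ?_⟩⟩
      exact (hH.xstar_filter hKx).2 a b hKa.2 (hFK hab)
    · rintro ⟨hFx, himp⟩
      refine ⟨hFx, ?_⟩
      by_contra hab
      obtain ⟨S, hSfin, hSne, hSirr, rfl⟩ := hFx
      have hFx : ⋂₀ S ∈ hH.XStar := ⟨S, hSfin, hSne, hSirr, rfl⟩
      obtain ⟨P₀, hP₀S, hP₀⟩ : ∃ P₀ ∈ S, hH.imp a b ∉ P₀ := by
        by_contra h
        push_neg at h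
        exact hab (fun P hP => h P hP)
      set T : Set (Set H) := {P ∈ S | hH.fext P a ≠ Set.univ} with hT
      have hchoice : ∀ P : Set H, ∃ Q : Set H, P ∈ T →
          hH.IsIrreducible Q ∧ hH.fext P a ⊆ Q ∧ (b ∈ hH.fext P a ∨ b ∉ Q) := by
        intro P
        by_cases hP : P ∈ T
        · have hPfil := (hSirr P hP.1).1
          have hext := hH.fext_filter hPfil a
          by_cases hbP : b ∈ hH.fext P a
          · obtain ⟨c, hc⟩ : ∃ c, c ∉ hH.fext P a := by
              by_contra h
              push_neg at h
              exact hP.2 (Set.eq_univ_of_forall h)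
            obtain ⟨Q, hQirr, hQsub, _⟩ := hH.separation hext hc
            exact ⟨Q, fun _ => ⟨hQirr, hQsub, Or.inl hbP⟩⟩
          · obtain ⟨Q, hQirr, hQsub, hbQ⟩ := hH.separation hext hbP
            exact ⟨Q, fun _ => ⟨hQirr, hQsub, Or.inr hbQ⟩⟩
        · exact ⟨∅, fun h => absurd h hP⟩
      choose f hf using hchoice
      set K : Set H := ⋂₀ (f '' T) with hK
      have hP₀T : P₀ ∈ T := by
        refine ⟨hP₀S, fun h => hP₀ ?_⟩
        have : b ∈ hH.fext P₀ a := h ▸ Set.mem_univ b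
        exact this
      have hKx : K ∈ hH.XStar := by
        refine ⟨f '' T, (hSfin.subset (Set.sep_subset _ _)).image f,
          ⟨f P₀, Set.mem_image_of_mem f hP₀T⟩, ?_, rfl⟩
        rintro Q ⟨P, hPT, rfl⟩
        exact (hf P hPT).1
      have hFK : ⋂₀ S ⊆ K := by
        rintro x hx Q ⟨P, hPT, rfl⟩
        exact (hf P hPT).2.1 (hH.subset_fext (hSirr P hPT.1).1 a (hx P hPT.1))
      have hKa : K ∈ hH.Phi a := by
        refine ⟨hKx, ?_⟩
        rintro Q ⟨P, hPT, rfl⟩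
        exact (hf P hPT).2.1 (hH.mem_fext_self (hSirr P hPT.1).1 a)
      have hKb := (himp K hKx hFK hKa).2
      have hbf : b ∈ f P₀ := hKb (f P₀) (Set.mem_image_of_mem f hP₀T)
      rcases (hf P₀ hP₀T).2.2 with h | h
      · exact hP₀ h
      · exact h hbf
  · intro a b hab
    exact hH.ax3 a b (hsub a b hab) (hsub b a hab.symm)
end

section
/- Let f : H → G be a homomorphism of Hilbert algebras and a ∈ H. Then Φ(f(a)) = {F ∈ X*(G) : every J ∈ X*(H) with f⁻¹(F) ⊆ J satisfies a ∈ J}, where Φ(c) = {F ∈ X*(G) : c ∈ F} for c ∈ G. -/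
theorem HilbertAlgebra.exists_irreducible_extension {H : Type*} (hH : HilbertAlgebra H)
    (F : Set H) (a : H) (hF : hH.IsImplicativeFilter F) (ha : a ∉ F) :
    ∃ Q : Set H, hH.IsIrreducible Q ∧ F ⊆ Q ∧ a ∉ Q := by
  set S : Set (Set H) := {Q | hH.IsImplicativeFilter Q ∧ a ∉ Q} with hS
  have hzorn : ∀ c ⊆ S, IsChain (· ⊆ ·) c → c.Nonempty →
      ∃ ub ∈ S, ∀ s ∈ c, s ⊆ ub := by
    intro c hcS hchain ⟨x, hx⟩
    refine ⟨⋃₀ c, ⟨⟨Set.mem_sUnion.2 ⟨x, hx, (hcS hx).1.1⟩, ?_⟩, ?_⟩,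
      fun s hs => Set.subset_sUnion_of_mem hs⟩
    · rintro u v ⟨s, hs, hus⟩ ⟨t, ht, hvt⟩
      rcases hchain.total hs ht with h | h
      · exact ⟨t, ht, (hcS ht).1.2 u v (h hus) hvt⟩
      · exact ⟨s, hs, (hcS hs).1.2 u v hus (h hvt)⟩
    · rintro ⟨s, hs, has⟩; exact (hcS hs).2 has
  obtain ⟨m, hFm, hm⟩ := zorn_subset_nonempty S hzorn F ⟨hF, ha⟩
  · obtain ⟨⟨hmF, ham⟩, hmax⟩ := hm
    refine ⟨m, ⟨hmF, ?_, ?_⟩, hFm, ham⟩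
    · intro h; exact ham (h ▸ Set.mem_univ a)
    · intro F₁ F₂ h₁ h₂ heq
      by_contra hcon
      push_neg at hcon
      have h1 : a ∈ F₁ := by
        by_contra ha1
        exact hcon.1 ((subset_antisymm (heq ▸ Set.inter_subset_left)
          (hmax ⟨h₁, ha1⟩ (heq ▸ Set.inter_subset_left))))
      have h2 : a ∈ F₂ := by
        by_contra ha2
        exact hcon.2 ((subset_antisymm (heq ▸ Set.inter_subset_right)
          (hmax ⟨h₂, ha2⟩ (heq ▸ Set.inter_subset_right))))
      exact ham (heq ▸ ⟨h1, h2⟩)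

theorem stmt_18 {H G : Type*} (hH : HilbertAlgebra H) (hG : HilbertAlgebra G) (f : H → G)
    (hf : hH.IsHom hG f) (a : H) :
    hG.Phi (f a) =
      {F : Set G | F ∈ hG.XStar ∧ ∀ J : Set H, J ∈ hH.XStar → f ⁻¹' F ⊆ J → a ∈ J} := by
  ext F
  simp only [HilbertAlgebra.Phi, Set.mem_setOf_eq]
  constructor
  · rintro ⟨hFX, hfa⟩
    exact ⟨hFX, fun J _ hsub => hsub hfa⟩
  · rintro ⟨hFX, hall⟩
    refine ⟨hFX, ?_⟩
    by_contra hfa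
    obtain ⟨Sset, _, _, hirr, rfl⟩ := hFX
    rw [Set.mem_sInter] at hfa
    push_neg at hfa
    obtain ⟨P, hPS, hfaP⟩ := hfa
    have hPfil : hH.IsImplicativeFilter (f ⁻¹' P) := by
      refine ⟨?_, ?_⟩
      · show f hH.one ∈ P; rw [hf.1]; exact (hirr P hPS).1.1
      · intro u v hu huv
        exact (hirr P hPS).1.2 (f u) (f v) hu (by rwa [Set.mem_preimage, hf.2] at huv)
    obtain ⟨Q, hQirr, hPQ, haQ⟩ :=
      hH.exists_irreducible_extension (f ⁻¹' P) a hPfil hfaP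
    refine haQ (hall Q ⟨{Q}, Set.finite_singleton Q, Set.singleton_nonempty Q,
      fun R hR => by rwa [Set.mem_singleton_iff.1 hR], (Set.sInter_singleton Q).symm⟩ ?_)
    exact fun x hx => hPQ (Set.mem_sInter.1 hx P hPS)
end
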